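/- Let θ ∈ (0,1) and define exponents p₁, p₂ by 1/p₁ = θ/3 and 1/p₂ = θ/3 + (1−θ)/2 (so that (1/p₁, 1/p₂; 0) lies on the open line segment joining B = (1/3, 1/3; 0) and E = (0, 1/2; 0)). Then there is no finite constant C > 0 such that ‖T(f₁,f₂)‖_∞ ≤ C ‖f₁‖_{p₁} ‖f₂‖_{p₂} holds for all nonnegative measurable functions f₁, f₂ on ℝ. -/

import Mathlib

open MeasureTheory ENNReal

/-- The `L^p` "norm" (with respect to Lebesgue measure on `ℝ`) of an
`ℝ≥0∞`-valued function, with the convention for `p = ∞`. -/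
noncomputable def lpNorm (p : ℝ≥0∞) (g : ℝ → ℝ≥0∞) : ℝ≥0∞ :=
  if p = ∞ then essSup g (volume : Measure ℝ)
  else (∫⁻ x, g x ^ p.toReal) ^ (1 / p.toReal)

/-- The bilinear spherical average in dimension `n = 2`:
`T(f₁,f₂)(x) = (1/(2π)) ∫₀^{2π} f₁(x − cos t) f₂(x − sin t) dt`. -/
noncomputable def T2 (f₁ f₂ : ℝ → ℝ) (x : ℝ) : ℝ≥0∞ :=
  (ENNReal.ofReal (2 * Real.pi))⁻¹ *
    ∫⁻ t in Set.Ioc 0 (2 * Real.pi),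
      ENNReal.ofReal (f₁ (x - Real.cos t)) * ENNReal.ofReal (f₂ (x - Real.sin t))

/-!
Write `u = 1/p₁`, `v = 1/p₂`, so that `u + 2v = 1` and `u + v < 1`. Test the inequality on
`f₁ = |y|^{-u}` and `f₂ = |y + 1|^{-v}` near `0` and `-1`, truncated at the heights `δ^{-u}` and
`(δ²)^{-v}`. Since `f₁^{p₁}` and `f₂^{p₂}` are truncations of `1/|y|` and `1/|y + 1|`, both
integrals are `O(log 1/δ)`, so the right-hand side is `O((log 1/δ)^{u+v})`. On the other hand, for
`-δ²/2 ≤ x ≤ 0` and `t = π/2 + s` with `δ ≤ s ≤ 1`, the point `x - cos t = x + sin s` is within `s`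
of `0` and `x - sin t = x - cos s` is within `s²` of `-1`, so the integrand of `T(f₁,f₂)(x)` is at
least `s^{-u} (s²)^{-v} = 1/s`, and `T(f₁,f₂)(x) ≳ log 1/δ`. Letting `δ → 0` contradicts
`u + v < 1`.
-/

open Set Filter Topology
open scoped Real

noncomputable def truncatedSingularity (δ a y : ℝ) : ℝ :=
  if |y| ≤ 1 then max |y| δ ^ (-a) else 0

namespace truncatedSingularity

variable {δ a y : ℝ}

lemma nonneg : 0 ≤ truncatedSingularity δ a y := by
  unfold truncatedSingularity
  split_ifs
  exacts [Real.rpow_nonneg ((abs_nonneg y).trans (le_max_left _ _)) _, le_rfl]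

lemma measurable : Measurable (truncatedSingularity δ a) :=
  Measurable.ite (measurableSet_le (by fun_prop) measurable_const) (by fun_prop) measurable_const

lemma rpow_neg_le {b : ℝ} (ha : 0 ≤ a) (hδ : 0 < δ) (hδb : δ ≤ b) (hyb : |y| ≤ b) (hb : b ≤ 1) :
    b ^ (-a) ≤ truncatedSingularity δ a y := by
  rw [truncatedSingularity, if_pos (hyb.trans hb)]
  exact Real.rpow_le_rpow_of_nonpos (hδ.trans_le (le_max_right _ _)) (max_le hyb hδb)
    (neg_nonpos.2 ha)

lemma ofReal_rpow_inv (ha : 0 < a) :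
    ENNReal.ofReal (truncatedSingularity δ a y) ^ a⁻¹ =
      ENNReal.ofReal (truncatedSingularity δ 1 y) := by
  rw [ENNReal.ofReal_rpow_of_nonneg nonneg (inv_nonneg.2 ha.le), truncatedSingularity,
    truncatedSingularity]
  split_ifs
  · rw [← Real.rpow_mul ((abs_nonneg y).trans (le_max_left _ _)), neg_mul,
      mul_inv_cancel₀ ha.ne']
  · rw [Real.zero_rpow (inv_ne_zero ha.ne')]

lemma ofReal_le_indicator (ha : 0 ≤ a) (hδ : 0 < δ) :
    ENNReal.ofReal (truncatedSingularity δ a y) ≤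
      (Icc (-1) 1).indicator (fun _ => ENNReal.ofReal (δ ^ (-a))) y := by
  rw [truncatedSingularity]
  split_ifs with hy
  · rw [indicator_of_mem (mem_Icc.2 (abs_le.1 hy))]
    exact ENNReal.ofReal_le_ofReal
      (Real.rpow_le_rpow_of_nonpos hδ (le_max_right _ _) (neg_nonpos.2 ha))
  · simp

lemma ofReal_le_indicator_add {δ' : ℝ} (ha : 0 ≤ a) (hδ' : 0 < δ') (hδ'δ : δ' ≤ δ) :
    ENNReal.ofReal (truncatedSingularity δ' a y) ≤
      (Icc (-δ) δ).indicator (fun _ => ENNReal.ofReal (δ' ^ (-a))) y +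
        ENNReal.ofReal (truncatedSingularity δ a y) := by
  rcases lt_or_ge |y| δ with hy | hy
  · rw [indicator_of_mem (mem_Icc.2 (abs_le.1 hy.le))]
    exact le_add_right ((ofReal_le_indicator ha hδ').trans (indicator_le_self _ _ y))
  · have h : truncatedSingularity δ' a y = truncatedSingularity δ a y := by
      simp only [truncatedSingularity, max_eq_left hy, max_eq_left (hδ'δ.trans hy)]
    exact h ▸ le_add_self

lemma lintegral_ofReal_one_le {r : ℝ} (hr0 : 0 < r) (hr1 : r ≤ 1) (N : ℕ) :
    ∫⁻ y, ENNReal.ofReal (truncatedSingularity (r ^ N) 1 y) ≤ ENNReal.ofReal (2 + 2 * N / r) := by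
  induction N with
  | zero =>
    calc _ ≤ ∫⁻ y, (Icc (-1 : ℝ) 1).indicator
              (fun _ => ENNReal.ofReal ((r ^ 0) ^ (-1 : ℝ))) y :=
          lintegral_mono fun y => ofReal_le_indicator zero_le_one (pow_pos hr0 0)
      _ = ENNReal.ofReal (2 + 2 * (0 : ℕ) / r) := by
          rw [lintegral_indicator_const measurableSet_Icc, Real.volume_Icc,
            ← ENNReal.ofReal_mul (by positivity)]
          norm_num
  | succ n ih =>
    have hrn : 0 < r ^ n := pow_pos hr0 n
    calc _ ≤ ∫⁻ y, ((Icc (-r ^ n) (r ^ n)).indicator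
              (fun _ => ENNReal.ofReal ((r ^ (n + 1)) ^ (-1 : ℝ))) y +
            ENNReal.ofReal (truncatedSingularity (r ^ n) 1 y)) :=
          lintegral_mono fun y => ofReal_le_indicator_add zero_le_one (pow_pos hr0 _)
            (pow_le_pow_of_le_one hr0.le hr1 n.le_succ)
      _ = ENNReal.ofReal (2 / r) +
            ∫⁻ y, ENNReal.ofReal (truncatedSingularity (r ^ n) 1 y) := by
          rw [lintegral_add_left (measurable_const.indicator measurableSet_Icc),
            lintegral_indicator_const measurableSet_Icc, Real.volume_Icc, Real.rpow_neg_one,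
            ← ENNReal.ofReal_mul (by positivity)]
          congr 2
          field_simp
          ring
      _ ≤ ENNReal.ofReal (2 / r) + ENNReal.ofReal (2 + 2 * n / r) := by gcongr
      _ = ENNReal.ofReal (2 + 2 * (n + 1 : ℕ) / r) := by
          rw [← ENNReal.ofReal_add (by positivity) (by positivity)]
          push_cast
          ring_nf

lemma lpNorm_le {p : ℝ≥0∞} {r B : ℝ} (ha : 0 < a) (hp : 1 / p = ENNReal.ofReal a)
    (hr0 : 0 < r) (hr1 : r ≤ 1) (N : ℕ) (c : ℝ) (hB : 2 + 2 * N / r ≤ B) :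
    lpNorm p (fun x => ENNReal.ofReal (truncatedSingularity (r ^ N) a (x + c))) ≤
      ENNReal.ofReal (B ^ a) := by
  have hp_top : p ≠ ∞ := by
    rintro rfl
    simp only [one_div, inv_top, eq_comm, ENNReal.ofReal_eq_zero] at hp
    linarith
  have hp_toReal : p.toReal = a⁻¹ := by
    rw [← inv_inv p, ← one_div p, hp, ENNReal.toReal_inv, ENNReal.toReal_ofReal ha.le]
  rw [_root_.lpNorm, if_neg hp_top, hp_toReal, one_div, inv_inv]
  simp_rw [ofReal_rpow_inv ha]
  have hB0 : 0 ≤ B := (by positivity : (0 : ℝ) ≤ 2 + 2 * N / r).trans hB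
  rw [lintegral_add_right_eq_self (fun y => ENNReal.ofReal (truncatedSingularity (r ^ N) 1 y)) c,
    ← ENNReal.ofReal_rpow_of_nonneg hB0 ha.le]
  exact ENNReal.rpow_le_rpow ((lintegral_ofReal_one_le hr0 hr1 N).trans
    (ENNReal.ofReal_le_ofReal hB)) ha.le

end truncatedSingularity

lemma ofReal_one_sub_le_setLIntegral_inv {r c : ℝ} (hr : 0 ≤ r) (hc : 0 < c) :
    ENNReal.ofReal (1 - r) ≤ ∫⁻ s in Ioc (r * c) c, ENNReal.ofReal s⁻¹ := by
  calc ENNReal.ofReal (1 - r) = ENNReal.ofReal c⁻¹ * volume (Ioc (r * c) c) := by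
        rw [Real.volume_Ioc, ← ENNReal.ofReal_mul (by positivity)]
        congr 1
        field_simp
    _ = ∫⁻ _ in Ioc (r * c) c, ENNReal.ofReal c⁻¹ := (setLIntegral_const _ _).symm
    _ ≤ ∫⁻ s in Ioc (r * c) c, ENNReal.ofReal s⁻¹ :=
        setLIntegral_mono' measurableSet_Ioc fun s hs =>
          ENNReal.ofReal_le_ofReal (inv_anti₀ ((mul_nonneg hr hc.le).trans_lt hs.1) hs.2)

lemma ofReal_mul_one_sub_le_setLIntegral_inv {r b : ℝ} (hr0 : 0 < r) (hr1 : r ≤ 1) (hb : 0 < b)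
    (n : ℕ) :
    ENNReal.ofReal (n * (1 - r)) ≤ ∫⁻ s in Ioc (r ^ n * b) b, ENNReal.ofReal s⁻¹ := by
  induction n with
  | zero => simp
  | succ n ih =>
    have hsplit :
        Ioc (r ^ (n + 1) * b) b = Ioc (r * (r ^ n * b)) (r ^ n * b) ∪ Ioc (r ^ n * b) b := by
      rw [Ioc_union_Ioc_eq_Ioc]
      · ring_nf
      · exact mul_le_of_le_one_left (by positivity) hr1
      · exact mul_le_of_le_one_left hb.le (pow_le_one₀ hr0.le hr1)
    calc ENNReal.ofReal ((n + 1 : ℕ) * (1 - r))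
        ≤ ENNReal.ofReal (1 - r) + ENNReal.ofReal (n * (1 - r)) := by
          push_cast
          rw [add_mul, one_mul, add_comm]
          exact ENNReal.ofReal_add_le
      _ ≤ _ := add_le_add
          (ofReal_one_sub_le_setLIntegral_inv (c := r ^ n * b) hr0.le (by positivity)) ih
      _ = _ := by rw [hsplit, lintegral_union measurableSet_Ioc (Ioc_disjoint_Ioc_of_le le_rfl)]

lemma inv_le_truncatedSingularity_mul {u v δ s x : ℝ} (hu : 0 ≤ u) (hv : 0 ≤ v)
    (huv : u + 2 * v = 1) (hδ : 0 < δ) (hδs : δ ≤ s) (hs : s ≤ 1)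
    (hx : x ∈ Icc (-(δ ^ 2 / 2)) 0) :
    s⁻¹ ≤ truncatedSingularity δ u (x + Real.sin s) *
      truncatedSingularity (δ ^ 2) v (x - Real.cos s + 1) := by
  have hs0 : 0 < s := hδ.trans_le hδs
  have hδs2 : δ ^ 2 ≤ s ^ 2 := pow_le_pow_left₀ hδ.le hδs 2
  have hs2 : s ^ 2 ≤ s := by nlinarith
  have hsin : |x + Real.sin s| ≤ s := abs_le.2
    ⟨by linarith [Real.sin_nonneg_of_nonneg_of_le_pi hs0.le (by linarith [Real.pi_gt_three]),
        hx.1],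
      by linarith [Real.sin_le hs0.le, hx.2]⟩
  have hcos : |x - Real.cos s + 1| ≤ s ^ 2 := abs_le.2
    ⟨by linarith [Real.cos_le_one s, sq_nonneg s, hx.1],
      by linarith [Real.one_sub_sq_div_two_le_cos (x := s), sq_nonneg s, hx.2]⟩
  calc s⁻¹ = s ^ (-u) * (s ^ 2) ^ (-v) := by
        rw [← Real.rpow_natCast, ← Real.rpow_mul hs0.le, ← Real.rpow_add hs0,
          show -u + (2 : ℕ) * -v = -1 by push_cast; linarith, Real.rpow_neg_one]
    _ ≤ _ := mul_le_mul (truncatedSingularity.rpow_neg_le hu hδ hδs hsin hs)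
        (truncatedSingularity.rpow_neg_le hv (pow_pos hδ 2) hδs2 hcos (hs2.trans hs))
        (Real.rpow_nonneg (sq_nonneg s) _) truncatedSingularity.nonneg

lemma setLIntegral_le_T2 (f₁ f₂ : ℝ → ℝ) (x : ℝ) {a b : ℝ} (ha : -(π / 2) ≤ a)
    (hb : b ≤ 3 * π / 2) :
    (ENNReal.ofReal (2 * π))⁻¹ * ∫⁻ s in Ioc a b,
      ENNReal.ofReal (f₁ (x + Real.sin s)) * ENNReal.ofReal (f₂ (x - Real.cos s)) ≤
        T2 f₁ f₂ x := by
  have h := (measurePreserving_add_right volume (π / 2)).setLIntegral_comp_emb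
    (measurableEmbedding_addRight _)
    (fun t => ENNReal.ofReal (f₁ (x - Real.cos t)) * ENNReal.ofReal (f₂ (x - Real.sin t)))
    (Ioc a b)
  simp only [Real.cos_add_pi_div_two, Real.sin_add_pi_div_two, sub_neg_eq_add,
    image_add_const_Ioc] at h
  rw [T2, h]
  gcongr <;> linarith

lemma setLIntegral_inv_le_T2_truncatedSingularity {u v δ x : ℝ} (hu : 0 ≤ u) (hv : 0 ≤ v)
    (huv : u + 2 * v = 1) (hδ : 0 < δ) (hx : x ∈ Icc (-(δ ^ 2 / 2)) 0) :
    (ENNReal.ofReal (2 * π))⁻¹ * ∫⁻ s in Ioc δ 1, ENNReal.ofReal s⁻¹ ≤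
      T2 (truncatedSingularity δ u) (fun y => truncatedSingularity (δ ^ 2) v (y + 1)) x := by
  refine le_trans ?_ (setLIntegral_le_T2 _ _ x (a := δ) (b := 1)
    (by linarith [Real.pi_pos]) (by linarith [Real.pi_gt_three]))
  refine mul_le_mul' le_rfl (setLIntegral_mono' measurableSet_Ioc fun s hs => ?_)
  rw [← ENNReal.ofReal_mul truncatedSingularity.nonneg]
  exact ENNReal.ofReal_le_ofReal (inv_le_truncatedSingularity_mul hu hv huv hδ hs.1.le hs.2 hx)

lemma ofReal_le_T2_truncatedSingularity {u v x : ℝ} (hu : 0 ≤ u) (hv : 0 ≤ v)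
    (huv : u + 2 * v = 1) (N : ℕ) (hx : x ∈ Icc (-(((1 / 2 : ℝ) ^ N) ^ 2 / 2)) 0) :
    ENNReal.ofReal (N / (4 * π)) ≤ T2 (truncatedSingularity ((1 / 2) ^ N) u)
      (fun y => truncatedSingularity (((1 / 2) ^ N) ^ 2) v (y + 1)) x := by
  calc ENNReal.ofReal (N / (4 * π))
      = (ENNReal.ofReal (2 * π))⁻¹ * ENNReal.ofReal (N * (1 - 1 / 2)) := by
        rw [← ENNReal.ofReal_inv_of_pos (by positivity), ← ENNReal.ofReal_mul (by positivity)]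
        congr 1
        field_simp
        ring
    _ ≤ (ENNReal.ofReal (2 * π))⁻¹ * ∫⁻ s in Ioc ((1 / 2) ^ N * 1) 1, ENNReal.ofReal s⁻¹ := by
        gcongr
        exact ofReal_mul_one_sub_le_setLIntegral_inv (by norm_num) (by norm_num) one_pos N
    _ ≤ _ := by
        rw [mul_one]
        exact setLIntegral_inv_le_T2_truncatedSingularity hu hv huv (by positivity) hx

lemma le_lpNorm_top_of_measure_ne_zero {g : ℝ → ℝ≥0∞} {s : Set ℝ} {c : ℝ≥0∞} (hs : volume s ≠ 0)
    (h : ∀ x ∈ s, c ≤ g x) : c ≤ lpNorm ∞ g := by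
  rw [_root_.lpNorm, if_pos rfl]
  by_contra! hlt
  exact hs (measure_mono_null (fun x hx => not_lt.2 (h x hx))
    (ae_iff.1 (ae_lt_of_essSup_lt hlt)))

lemma eventually_mul_rpow_lt {w : ℝ} (hw : w < 1) (K : ℝ) {c : ℝ} (hc : 0 ≤ c) :
    ∀ᶠ x : ℝ in atTop, K * (c * x) ^ w < x := by
  have h : Tendsto (fun x : ℝ => K * c ^ w * x ^ (-(1 - w))) atTop (𝓝 0) := by
    simpa using (tendsto_rpow_neg_atTop (sub_pos.2 hw)).const_mul (K * c ^ w)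
  filter_upwards [h.eventually (gt_mem_nhds one_pos), eventually_gt_atTop 0] with x hx hx0
  calc K * (c * x) ^ w = K * c ^ w * x ^ (-(1 - w)) * x := by
        rw [Real.mul_rpow hc hx0.le, mul_assoc (K * c ^ w), ← Real.rpow_add_one hx0.ne',
          show -(1 - w) + 1 = w by ring, mul_assoc]
    _ < 1 * x := mul_lt_mul_of_pos_right hx hx0
    _ = x := one_mul x

theorem not_strong_type_on_open_segment_BE (θ : ℝ) (hθ : θ ∈ Set.Ioo (0 : ℝ) 1)
    (p₁ p₂ : ℝ≥0∞)
    (hp₁ : 1 / p₁ = ENNReal.ofReal (θ / 3))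
    (hp₂ : 1 / p₂ = ENNReal.ofReal (θ / 3 + (1 - θ) / 2)) :
    ¬ ∃ C : ℝ, 0 < C ∧ ∀ f₁ f₂ : ℝ → ℝ, Measurable f₁ → Measurable f₂ →
      (∀ x, 0 ≤ f₁ x) → (∀ x, 0 ≤ f₂ x) →
      lpNorm ∞ (T2 f₁ f₂) ≤ ENNReal.ofReal C *
        lpNorm p₁ (fun x => ENNReal.ofReal (f₁ x)) *
        lpNorm p₂ (fun x => ENNReal.ofReal (f₂ x)) := by
  rintro ⟨C, hC, hbound⟩
  obtain ⟨hθ0, hθ1⟩ := hθ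
  have hu : 0 < θ / 3 := by positivity
  have hv : 0 < θ / 3 + (1 - θ) / 2 := by linarith
  obtain ⟨N, hN, hN1⟩ := ((tendsto_natCast_atTop_atTop.eventually
    (eventually_mul_rpow_lt (w := θ / 3 + (θ / 3 + (1 - θ) / 2)) (by linarith) (4 * π * C)
      (c := 10) (by norm_num))).and (eventually_ge_atTop 1)).exists
  have hN0 : (1 : ℝ) ≤ N := Nat.one_le_cast.2 hN1
  have hδ2 : ((1 / 2 : ℝ) ^ N) ^ 2 = (1 / 4) ^ N := by rw [← pow_mul, mul_comm, pow_mul]; norm_num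
  have hT := le_lpNorm_top_of_measure_ne_zero (by simp [Real.volume_Icc])
    fun x hx => ofReal_le_T2_truncatedSingularity hu.le hv.le (by ring) N hx
  have h₁ := truncatedSingularity.lpNorm_le hu hp₁ (r := 1 / 2) (B := 10 * N) (by norm_num)
    (by norm_num) N 0 (by linarith)
  have h₂ := truncatedSingularity.lpNorm_le hv hp₂ (r := 1 / 4) (B := 10 * N) (by norm_num)
    (by norm_num) N 1 (by linarith)
  simp only [add_zero] at h₁
  rw [← hδ2] at h₂
  have key := hT.trans ((hbound _ _ truncatedSingularity.measurable
    (truncatedSingularity.measurable.comp (measurable_add_const 1))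
    (fun _ => truncatedSingularity.nonneg) (fun _ => truncatedSingularity.nonneg)).trans
    (mul_le_mul' (mul_le_mul' le_rfl h₁) h₂))
  rw [← ENNReal.ofReal_mul hC.le, ← ENNReal.ofReal_mul (by positivity),
    ENNReal.ofReal_le_ofReal_iff (by positivity), mul_assoc, ← Real.rpow_add (by positivity),
    div_le_iff₀ (by positivity)] at key
  linarith
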